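/- arXiv:2510.12664 — 3 statements merged into one kernel-verified Lean document; each statement's English description precedes it below -/
import Mathlib

section
/- Let w̃ ∈ V and z ∈ H, and suppose the residual functional r(η) := ⟨z, η⟩ − ℓ(η) on V can be written as r = r₁ + r₂ with r₁, r₂ linear on V and |r₁(η)| ≤ R₁‖η‖, |r₂(η)| ≤ R₂‖η‖ for all η ∈ V, for constants R₁, R₂ ≥ 0. Then for all α₁, α₂ > 0 with α₁ + α₂ < 1: (1 − α₁ − α₂)‖w̃ − w‖² + ‖z − w‖² ≤ ‖w̃ − z‖² + R₁²/α₁ + R₂²/α₂. (Estimate (id3a); in the paper R₁ = C_F |||t^{2s−1} div_{xt} y||| and R₂ = C_F^s κ_s ‖g + y_{d+1}(·,0)‖.) -/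
open RealInnerProductSpace

/-- estimate (id3a): if the residual `⟪z, η⟫ − ℓ η = r₁ η + r₂ η` with
`|rᵢ η| ≤ Rᵢ ‖η‖`, then for all `α₁, α₂ > 0` with `α₁ + α₂ < 1`,
`(1 − α₁ − α₂)‖w̃ − w‖² + ‖z − w‖² ≤ ‖w̃ − z‖² + R₁²/α₁ + R₂²/α₂`. -/
theorem stmt_7 {H : Type*} [NormedAddCommGroup H] [InnerProductSpace ℝ H] [CompleteSpace H]
    (V : Submodule ℝ H) (hV : IsClosed (V : Set H))
    (ℓ : V →L[ℝ] ℝ)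
    (w : V) (hw : ∀ η : V, ⟪(w : H), (η : H)⟫ = ℓ η)
    (wtil : V) (z : H)
    (r₁ r₂ : V →ₗ[ℝ] ℝ) (R₁ R₂ : ℝ) (hR₁ : 0 ≤ R₁) (hR₂ : 0 ≤ R₂)
    (hr : ∀ η : V, ⟪z, (η : H)⟫ - ℓ η = r₁ η + r₂ η)
    (hb₁ : ∀ η : V, |r₁ η| ≤ R₁ * ‖η‖)
    (hb₂ : ∀ η : V, |r₂ η| ≤ R₂ * ‖η‖)
    (α₁ α₂ : ℝ) (hα₁ : 0 < α₁) (hα₂ : 0 < α₂) (hsum : α₁ + α₂ < 1) :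
    (1 - α₁ - α₂) * ‖(wtil : H) - w‖ ^ 2 + ‖z - w‖ ^ 2 ≤
      ‖(wtil : H) - z‖ ^ 2 + R₁ ^ 2 / α₁ + R₂ ^ 2 / α₂ := by
  set e : V := wtil - w with he
  have hecoe : (e : H) = (wtil : H) - (w : H) := rfl
  -- residual identity at e
  have h1 : ⟪z - (w : H), (e : H)⟫ = r₁ e + r₂ e := by
    rw [inner_sub_left, hw e]
    have := hr e
    linarith
  -- norm expansion: ‖wtil - z‖² = ‖e‖² - 2⟪e, z - w⟫ + ‖z - w‖²
  have h2 : ‖(wtil : H) - z‖ ^ 2 =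
      ‖(e : H)‖ ^ 2 - 2 * ⟪(e : H), z - (w : H)⟫ + ‖z - (w : H)‖ ^ 2 := by
    have : (wtil : H) - z = (e : H) - (z - (w : H)) := by rw [hecoe]; abel
    rw [this, @norm_sub_sq_real]
  have hsymm : ⟪(e : H), z - (w : H)⟫ = ⟪z - (w : H), (e : H)⟫ := real_inner_comm _ _
  have hne : ‖(e : H)‖ = ‖e‖ := rfl
  rw [hne, hsymm, h1] at h2
  have hb1 := hb₁ e
  have hb2 := hb₂ e
  have habs1 : r₁ e ≤ R₁ * ‖e‖ := le_trans (le_abs_self _) hb1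
  have habs2 : r₂ e ≤ R₂ * ‖e‖ := le_trans (le_abs_self _) hb2
  -- Young inequalities
  have hy1 : 2 * (R₁ * ‖e‖) ≤ α₁ * ‖e‖ ^ 2 + R₁ ^ 2 / α₁ := by
    have h := sq_nonneg (α₁ * ‖e‖ - R₁)
    have key : 0 ≤ (α₁ * ‖e‖ - R₁) ^ 2 / α₁ := div_nonneg h hα₁.le
    have expand : (α₁ * ‖e‖ - R₁) ^ 2 / α₁ =
        α₁ * ‖e‖ ^ 2 + R₁ ^ 2 / α₁ - 2 * (R₁ * ‖e‖) := by
      field_simp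
      ring
    linarith [expand ▸ key]
  have hy2 : 2 * (R₂ * ‖e‖) ≤ α₂ * ‖e‖ ^ 2 + R₂ ^ 2 / α₂ := by
    have h := sq_nonneg (α₂ * ‖e‖ - R₂)
    have key : 0 ≤ (α₂ * ‖e‖ - R₂) ^ 2 / α₂ := div_nonneg h hα₂.le
    have expand : (α₂ * ‖e‖ - R₂) ^ 2 / α₂ =
        α₂ * ‖e‖ ^ 2 + R₂ ^ 2 / α₂ - 2 * (R₂ * ‖e‖) := by
      field_simp
      ring
    linarith [expand ▸ key]
  have hwe : ‖(wtil : H) - (w : H)‖ = ‖e‖ := by rw [← hecoe]; rfl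
  rw [hwe]
  linarith [h2, habs1, habs2, hy1, hy2]
end

section
/- For w̃ ∈ V and z ∈ H define M_⊕(w̃; z) := ‖w̃ − z‖ + ‖r_z‖_*, where ‖r_z‖_* := sup { ⟨z, η⟩ − ℓ(η) : η ∈ V, ‖η‖ ≤ 1 } is the operator norm on V of the residual functional r_z(η) = ⟨z, η⟩ − ℓ(η). Then for every w̃ ∈ V: ‖w̃ − w‖ = inf_{z ∈ H} M_⊕(w̃; z), and the infimum is attained at z = w (both terms of the majorant then being ‖w̃ − w‖ and 0, respectively). (Right-hand equality in (maj) of Theorem 2.) -/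
open RealInnerProductSpace

/-- right-hand equality in (maj) of Theorem 2: with the majorant
`M_⊕(w̃; z) = ‖w̃ − z‖ + sup {⟪z, η⟫ − ℓ η : η ∈ V, ‖η‖ ≤ 1}`, the error `‖w̃ − w‖` is
the least value of `M_⊕(w̃; ·)` over `z ∈ H`, attained at `z = w`, where both terms of the
majorant are `‖w̃ − w‖` and `0` respectively. -/
theorem stmt_10 {H : Type*} [NormedAddCommGroup H] [InnerProductSpace ℝ H] [CompleteSpace H]
    (V : Submodule ℝ H) (hV : IsClosed (V : Set H))
    (ℓ : V →L[ℝ] ℝ)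
    (w : V) (hw : ∀ η : V, ⟪(w : H), (η : H)⟫ = ℓ η)
    (wtil : V) :
    IsLeast {m : ℝ | ∃ z : H,
        m = ‖(wtil : H) - z‖ +
          sSup {r : ℝ | ∃ η : V, ‖η‖ ≤ 1 ∧ r = ⟪z, (η : H)⟫ - ℓ η}}
      (‖(wtil : H) - (w : H)‖) ∧
    sSup {r : ℝ | ∃ η : V, ‖η‖ ≤ 1 ∧ r = ⟪(w : H), (η : H)⟫ - ℓ η} = 0 := by
  have hS0 : {r : ℝ | ∃ η : V, ‖η‖ ≤ 1 ∧ r = ⟪(w : H), (η : H)⟫ - ℓ η} = {(0 : ℝ)} := by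
    ext r
    simp only [Set.mem_setOf_eq, Set.mem_singleton_iff]
    constructor
    · rintro ⟨η, -, rfl⟩
      rw [hw η]; ring
    · rintro rfl
      exact ⟨0, by simp, by simp [← hw 0]⟩
  have hsup0 : sSup {r : ℝ | ∃ η : V, ‖η‖ ≤ 1 ∧ r = ⟪(w : H), (η : H)⟫ - ℓ η} = 0 := by
    rw [hS0]; exact csSup_singleton 0
  refine ⟨⟨⟨(w : H), by rw [hsup0, add_zero]⟩, ?_⟩, hsup0⟩
  rintro m ⟨z, rfl⟩
  set S := {r : ℝ | ∃ η : V, ‖η‖ ≤ 1 ∧ r = ⟪z, (η : H)⟫ - ℓ η} with hSdef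
  have hbdd : BddAbove S := by
    refine ⟨‖z‖ + ‖ℓ‖, ?_⟩
    rintro r ⟨η, hη, rfl⟩
    have h1 : ⟪z, (η : H)⟫ ≤ ‖z‖ := by
      calc ⟪z, (η : H)⟫ ≤ ‖z‖ * ‖(η : H)‖ := real_inner_le_norm _ _
        _ ≤ ‖z‖ * 1 := by
            have : ‖(η : H)‖ = ‖η‖ := rfl
            rw [this]; exact mul_le_mul_of_nonneg_left hη (norm_nonneg _)
        _ = ‖z‖ := mul_one _
    have h2 : -(ℓ η) ≤ ‖ℓ‖ := by
      have h := ℓ.le_opNorm η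
      have habs : |ℓ η| ≤ ‖ℓ‖ * ‖η‖ := by simpa using h
      have : ‖ℓ‖ * ‖η‖ ≤ ‖ℓ‖ * 1 := mul_le_mul_of_nonneg_left hη (norm_nonneg ℓ)
      have := habs.trans this
      rw [mul_one] at this
      linarith [neg_abs_le (ℓ η)]
    linarith
  have h0S : (0 : ℝ) ∈ S := ⟨0, by simp, by simp [← hw 0]⟩
  have hsnn : 0 ≤ sSup S := le_csSup hbdd h0S
  set c := ‖(wtil : H) - (w : H)‖ with hc
  rcases eq_or_lt_of_le (norm_nonneg ((wtil : H) - (w : H))) with h0 | hpos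
  · have hc0 : c = 0 := h0.symm
    rw [hc0]
    positivity
  · -- c > 0
    set η₀ : V := c⁻¹ • (wtil - w) with hη₀
    have hcoe : ((η₀ : H)) = c⁻¹ • ((wtil : H) - (w : H)) := rfl
    have hnη₀ : ‖η₀‖ ≤ 1 := by
      have : ‖η₀‖ = ‖(η₀ : H)‖ := rfl
      rw [this, hcoe, norm_smul]
      simp only [norm_inv, Real.norm_eq_abs]
      rw [abs_of_pos hpos, ← hc, inv_mul_cancel₀ (ne_of_gt hpos)]
    have hmem : ⟪z, (η₀ : H)⟫ - ℓ η₀ ∈ S := ⟨η₀, hnη₀, rfl⟩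
    have hle : ⟪z, (η₀ : H)⟫ - ℓ η₀ ≤ sSup S := le_csSup hbdd hmem
    have hval : ⟪z, (η₀ : H)⟫ - ℓ η₀ = c⁻¹ * ⟪z - (w : H), (wtil : H) - (w : H)⟫ := by
      rw [← hw η₀, hcoe]
      rw [real_inner_smul_right, real_inner_smul_right]
      rw [inner_sub_left]
      ring
    -- key inequality
    have hsq : c ^ 2 = ⟪(wtil : H) - z, (wtil : H) - (w : H)⟫
        + ⟪z - (w : H), (wtil : H) - (w : H)⟫ := by
      rw [← inner_add_left]
      have : (wtil : H) - z + (z - (w : H)) = (wtil : H) - (w : H) := by abel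
      rw [this, hc, real_inner_self_eq_norm_sq]
    have h1 : ⟪(wtil : H) - z, (wtil : H) - (w : H)⟫ ≤ ‖(wtil : H) - z‖ * c := by
      calc ⟪(wtil : H) - z, (wtil : H) - (w : H)⟫
          ≤ ‖(wtil : H) - z‖ * ‖(wtil : H) - (w : H)‖ := real_inner_le_norm _ _
        _ = ‖(wtil : H) - z‖ * c := by rw [hc]
    have h2 : ⟪z - (w : H), (wtil : H) - (w : H)⟫ ≤ c * sSup S := by
      have := hle
      rw [hval] at this
      have h3 : c * (c⁻¹ * ⟪z - (w : H), (wtil : H) - (w : H)⟫) ≤ c * sSup S :=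
        mul_le_mul_of_nonneg_left this (le_of_lt hpos)
      rwa [← mul_assoc, mul_inv_cancel₀ (ne_of_gt hpos), one_mul] at h3
    nlinarith [hsq, h1, h2, hpos]
end

section
/- Let (V_n) be a nondecreasing sequence of subspaces of V (V_n ⊆ V_{n+1}) whose union is dense in V, and let w̃ ∈ V. Define s_n := sup_{η ∈ V_n} (2⟨w̃, η⟩ − 2ℓ(η) − ‖η‖²). Then the sequence (s_n) is nondecreasing and converges to ‖w̃ − w‖² as n → ∞. (Remark on computable two-sided bounds via limit-dense finite-dimensional subspaces: the minorants computed on a limit-dense family of subspaces determine the error norm with any desired accuracy.) -/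
open RealInnerProductSpace

/-- Remark on limit-dense subspaces: if `(V_n)` is a nondecreasing
sequence of subspaces of `V` whose union is dense in `V`, then the minorant suprema
`s_n = sup_{η ∈ V_n} (2⟪w̃, η⟫ − 2 ℓ η − ‖η‖²)` form a nondecreasing sequence converging
to `‖w̃ − w‖²`. -/
theorem stmt_15 {H : Type*} [NormedAddCommGroup H] [InnerProductSpace ℝ H] [CompleteSpace H]
    (V : Submodule ℝ H) (hV : IsClosed (V : Set H))
    (ℓ : V →L[ℝ] ℝ)
    (w : V) (hw : ∀ η : V, ⟪(w : H), (η : H)⟫ = ℓ η)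
    (Vn : ℕ → Submodule ℝ V) (hmono : Monotone Vn)
    (hdense : Dense (⋃ n, (Vn n : Set V)))
    (wtil : V)
    (sn : ℕ → ℝ)
    (hsn : ∀ n, sn n =
      sSup {r : ℝ | ∃ η ∈ Vn n, r = 2 * ⟪(wtil : H), (η : H)⟫ - 2 * ℓ η - ‖η‖ ^ 2}) :
    Monotone sn ∧
      Filter.Tendsto sn Filter.atTop (nhds (‖(wtil : H) - (w : H)‖ ^ 2)) := by
  set u : H := (wtil : H) - (w : H) with hu
  -- the key algebraic identity
  have key : ∀ η : V, 2 * ⟪(wtil : H), (η : H)⟫ - 2 * ℓ η - ‖η‖ ^ 2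
      = ‖u‖ ^ 2 - ‖u - (η : H)‖ ^ 2 := by
    intro η
    have h1 : (ℓ η : ℝ) = ⟪(w : H), (η : H)⟫ := (hw η).symm
    have h2 : ‖u - (η : H)‖ ^ 2 = ‖u‖ ^ 2 - 2 * ⟪u, (η : H)⟫ + ‖(η : H)‖ ^ 2 :=
      norm_sub_sq_real u (η : H)
    have h3 : ⟪u, (η : H)⟫ = ⟪(wtil : H), (η : H)⟫ - ⟪(w : H), (η : H)⟫ := by
      rw [hu, inner_sub_left]
    have h4 : ‖η‖ = ‖(η : H)‖ := rfl
    rw [h1, h2, h3, h4]; ring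
  -- describe the sets
  set S : ℕ → Set ℝ :=
    fun n => {r : ℝ | ∃ η ∈ Vn n, r = 2 * ⟪(wtil : H), (η : H)⟫ - 2 * ℓ η - ‖η‖ ^ 2} with hS
  have hSne : ∀ n, (S n).Nonempty := fun n =>
    ⟨_, 0, (Vn n).zero_mem, rfl⟩
  have hSbdd : ∀ n, BddAbove (S n) := by
    intro n
    refine ⟨‖u‖ ^ 2, ?_⟩
    rintro r ⟨η, hη, rfl⟩
    rw [key η]
    nlinarith [sq_nonneg (‖u - (η : H)‖)]
  have hSmono : ∀ {m n}, m ≤ n → S m ⊆ S n := by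
    intro m n hmn r hr
    obtain ⟨η, hη, rfl⟩ := hr
    exact ⟨η, hmono hmn hη, rfl⟩
  have hsn_le : ∀ n, sn n ≤ ‖u‖ ^ 2 := by
    intro n
    rw [hsn n]
    refine csSup_le (hSne n) ?_
    rintro r ⟨η, hη, rfl⟩
    rw [key η]
    nlinarith [sq_nonneg (‖u - (η : H)‖)]
  have hge : ∀ n, ∀ η ∈ Vn n, ‖u‖ ^ 2 - ‖u - (η : H)‖ ^ 2 ≤ sn n := by
    intro n η hη
    rw [hsn n]
    exact le_csSup (hSbdd n) ⟨η, hη, (key η).symm⟩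
  constructor
  · intro m n hmn
    rw [hsn m, hsn n]
    exact csSup_le_csSup (hSbdd n) (hSne m) (hSmono hmn)
  · rw [Metric.tendsto_atTop]
    intro ε hε
    -- find an approximant
    have hu' : (wtil - w : V) ∈ closure (⋃ n, (Vn n : Set V)) := hdense _
    obtain ⟨η, hηmem, hηdist⟩ := Metric.mem_closure_iff.1 hu' (Real.sqrt ε)
      (Real.sqrt_pos.2 hε)
    obtain ⟨n0, hn0⟩ := Set.mem_iUnion.1 hηmem
    refine ⟨n0, fun n hn => ?_⟩
    have hη : η ∈ Vn n := hmono hn hn0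
    have hdist : ‖u - (η : H)‖ < Real.sqrt ε := by
      have : dist (wtil - w : V) η = ‖u - (η : H)‖ := by
        rw [dist_eq_norm]
        rfl
      rwa [this] at hηdist
    have hsq : ‖u - (η : H)‖ ^ 2 < ε := by
      have h0 : (0 : ℝ) ≤ ‖u - (η : H)‖ := norm_nonneg _
      calc ‖u - (η : H)‖ ^ 2 < Real.sqrt ε ^ 2 := by
            apply sq_lt_sq' <;> nlinarith [Real.sqrt_nonneg ε]
        _ = ε := Real.sq_sqrt hε.le
    have hlow : ‖u‖ ^ 2 - ε < sn n := by
      have := hge n η hη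
      linarith
    rw [Real.dist_eq, abs_lt]
    constructor <;> [skip; skip] <;>
      [ (have := hsn_le n; linarith); (have := hsn_le n; linarith) ]
end
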